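/- Let τ > 0, δ ∈ (0,1/2), C₃ > 0, a₁, a₂ ∈ ℝ, κ₁ ≥ 0, κ₂ > 0, and M as above. Define φ₃(x,y) = C₃((x²+y²)/|y|^{3/2})^{δ} on X₃ = {(x,y) : x ≤ −1, |y| ≥ 1}. Then φ₃ ≥ 0 on X₃, φ₃ → ∞ as x²+y² → ∞ in X₃, and there exist R > 0 and c > 0 such that for (x,y) ∈ X₃ with x²+y² ≥ R², τ(Mφ₃)(x,y) ≤ (δ/2)·x·φ₃(x,y) ≤ −c·|x|·((x²+y²)/|y|^{3/2})^{δ}; in particular Mφ₃ → −∞ as x²+y² → ∞ in X₃. -/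

import Mathlib

/-!
Off the axis `y = 0` write `φ₃ = C₃ s^δ (y²)^(-3δ/4)` with `s = x² + y²`. The exponent `-3δ/4` is
the one for which the quadratic part of the drift contributes exactly `δ x φ₃`:
`τ Mφ₃ = δ φ₃ (x + E)`, and every term of the remainder `E` is `O(1/|y|)` on `X₃`. Since
`|x|, |y| ≥ 1` there, `(2|x||y|)² ≥ s`, so `E ≤ |x|/2 = -x/2` once `s` is large, which gives
`τ Mφ₃ ≤ (δ/2) x φ₃ ≤ -(δ/2) φ₃`. Growth comes from `|y|^(3/2) ≤ s^(3/4)`, i.e. `φ₃ ≥ C₃ s^(δ/4)`.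
-/

/-- Partial derivative in `x` of a function of two real variables. -/
noncomputable def pdx (f : ℝ → ℝ → ℝ) (x y : ℝ) : ℝ := deriv (fun x' => f x' y) x

/-- Partial derivative in `y` of a function of two real variables. -/
noncomputable def pdy (f : ℝ → ℝ → ℝ) (x y : ℝ) : ℝ := deriv (fun y' => f x y') y

/-- The generator `M` of the planar diffusion, in real coordinates. -/
noncomputable def Mop (τ a₁ a₂ κ₁ κ₂ : ℝ) (f : ℝ → ℝ → ℝ) (x y : ℝ) : ℝ :=
  -(1 / τ) * (x ^ 2 - y ^ 2 - a₁) * pdx f x y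
    - (1 / τ) * (2 * x * y - a₂) * pdy f x y
    + (κ₁ / τ) * pdx (fun x' y' => pdx f x' y') x y
    + (κ₂ / τ) * pdy (fun x' y' => pdy f x' y') x y

open Filter Topology

noncomputable def powerWeight (p q x y : ℝ) : ℝ := (x ^ 2 + y ^ 2) ^ p * (y ^ 2) ^ q

lemma abs_rpow_three_halves (y : ℝ) : |y| ^ (3 / 2 : ℝ) = (y ^ 2) ^ (3 / 4 : ℝ) := by
  rw [← sq_abs, ← Real.rpow_natCast, ← Real.rpow_mul (abs_nonneg y)]; norm_num

section powerWeight

variable {x y : ℝ}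

lemma hasDerivAt_powerWeight_x (p q : ℝ) (hs : x ^ 2 + y ^ 2 ≠ 0) :
    HasDerivAt (fun x' => powerWeight p q x' y) (2 * p * x * powerWeight (p - 1) q x y) x := by
  have h := (((hasDerivAt_pow 2 x).add_const (y ^ 2)).rpow_const (p := p) (Or.inl hs)).mul_const
    ((y ^ 2) ^ q)
  unfold powerWeight
  refine h.congr_deriv ?_
  norm_num
  ring

lemma hasDerivAt_powerWeight_y (p q : ℝ) (hy : y ≠ 0) :
    HasDerivAt (fun y' => powerWeight p q x y')
      (2 * y * (p * powerWeight (p - 1) q x y + q * powerWeight p (q - 1) x y)) y := by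
  have hs : x ^ 2 + y ^ 2 ≠ 0 := by positivity
  have h := (((hasDerivAt_pow 2 y).const_add (x ^ 2)).rpow_const (p := p) (Or.inl hs)).mul
    ((hasDerivAt_pow 2 y).rpow_const (p := q) (Or.inl (by positivity)))
  unfold powerWeight
  refine h.congr_deriv ?_
  norm_num
  ring

lemma powerWeight_sub_one_left (hs : x ^ 2 + y ^ 2 ≠ 0) (p q : ℝ) :
    powerWeight (p - 1) q x y = powerWeight p q x y / (x ^ 2 + y ^ 2) := by
  rw [powerWeight, powerWeight, Real.rpow_sub_one hs]; ring

lemma powerWeight_sub_one_right (hy : y ≠ 0) (p q : ℝ) :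
    powerWeight p (q - 1) x y = powerWeight p q x y / y ^ 2 := by
  rw [powerWeight, powerWeight, Real.rpow_sub_one (by positivity)]; ring

lemma div_abs_rpow_rpow_eq_powerWeight (δ : ℝ) (hy : y ≠ 0) :
    ((x ^ 2 + y ^ 2) / |y| ^ (3 / 2 : ℝ)) ^ δ = powerWeight δ (-(3 * δ / 4)) x y := by
  rw [abs_rpow_three_halves, Real.div_rpow (by positivity) (by positivity),
    ← Real.rpow_mul (sq_nonneg y), div_eq_mul_inv, ← Real.rpow_neg (sq_nonneg y), powerWeight]
  ring_nf

end powerWeight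

lemma Mop_congr_of_eqOn_ne_zero {f g : ℝ → ℝ → ℝ} (hfg : ∀ x y, y ≠ 0 → f x y = g x y)
    (τ a₁ a₂ κ₁ κ₂ : ℝ) {x y : ℝ} (hy : y ≠ 0) :
    Mop τ a₁ a₂ κ₁ κ₂ f x y = Mop τ a₁ a₂ κ₁ κ₂ g x y := by
  have hpdx : ∀ x', pdx f x' y = pdx g x' y := fun x' => by
    rw [pdx, pdx, funext fun x'' => hfg x'' y hy]
  have hpdy : ∀ y', y' ≠ 0 → pdy f x y' = pdy g x y' := fun y' hy' =>
    EventuallyEq.deriv_eq <| mem_of_superset (isOpen_ne.mem_nhds hy') fun _ h =>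
      hfg x _ h
  have hpdxx : pdx (fun x' y' => pdx f x' y') x y = pdx (fun x' y' => pdx g x' y') x y :=
    congrArg (deriv · x) (funext hpdx)
  have hpdyy : pdy (fun x' y' => pdy f x' y') x y = pdy (fun x' y' => pdy g x' y') x y :=
    EventuallyEq.deriv_eq <| mem_of_superset (isOpen_ne.mem_nhds hy) fun _ h =>
      hpdy _ h
  rw [Mop, Mop, hpdx, hpdy y hy, hpdxx, hpdyy]

noncomputable def lyapunovRatio (δ a₁ a₂ κ₁ κ₂ x y : ℝ) : ℝ :=
  x + 2 * a₁ * x / (x ^ 2 + y ^ 2) + 2 * a₂ * y / (x ^ 2 + y ^ 2) - 3 * a₂ / (2 * y)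
    + κ₁ * ((4 * δ - 4) * x ^ 2 / (x ^ 2 + y ^ 2) ^ 2 + 2 / (x ^ 2 + y ^ 2))
    + κ₂ * ((4 * δ - 4) * y ^ 2 / (x ^ 2 + y ^ 2) ^ 2 + (2 - 6 * δ) / (x ^ 2 + y ^ 2)
      + (9 * δ / 4 + 3 / 2) / y ^ 2)

lemma mul_Mop_const_mul_powerWeight {τ : ℝ} (hτ : τ ≠ 0) (C δ a₁ a₂ κ₁ κ₂ : ℝ) {x y : ℝ}
    (hy : y ≠ 0) :
    τ * Mop τ a₁ a₂ κ₁ κ₂ (fun x y => C * powerWeight δ (-(3 * δ / 4)) x y) x y =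
      δ * (C * powerWeight δ (-(3 * δ / 4)) x y) * lyapunovRatio δ a₁ a₂ κ₁ κ₂ x y := by
  set q := -(3 * δ / 4) with hq
  have hs : ∀ x', x' ^ 2 + y ^ 2 ≠ 0 := fun x' => by positivity
  have hpdx : ∀ x', pdx (fun x y => C * powerWeight δ q x y) x' y =
      C * (2 * δ * x' * powerWeight (δ - 1) q x' y) := fun x' =>
    ((hasDerivAt_powerWeight_x δ q (hs x')).const_mul C).deriv
  have hpdy : ∀ y', y' ≠ 0 → pdy (fun x y => C * powerWeight δ q x y) x y' =
      C * (2 * y' * (δ * powerWeight (δ - 1) q x y' + q * powerWeight δ (q - 1) x y')) :=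
    fun y' hy' => ((hasDerivAt_powerWeight_y δ q hy').const_mul C).deriv
  have hpdxx : pdx (fun x' y' => pdx (fun x y => C * powerWeight δ q x y) x' y') x y =
      C * (2 * δ * (powerWeight (δ - 1) q x y
        + x * (2 * (δ - 1) * x * powerWeight (δ - 1 - 1) q x y))) := by
    change deriv (fun x' => pdx _ x' y) x = _
    simp only [hpdx]
    refine ((((hasDerivAt_id x).const_mul (2 * δ)).mul
      (hasDerivAt_powerWeight_x (δ - 1) q (hs x))).const_mul C).deriv.trans ?_
    simp only [id]; ring
  have hpdyy : pdy (fun x' y' => pdy (fun x y => C * powerWeight δ q x y) x' y') x y =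
      C * (2 * (δ * powerWeight (δ - 1) q x y + q * powerWeight δ (q - 1) x y)
        + 2 * y * (δ * (2 * y * ((δ - 1) * powerWeight (δ - 1 - 1) q x y
            + q * powerWeight (δ - 1) (q - 1) x y))
          + q * (2 * y * (δ * powerWeight (δ - 1) (q - 1) x y
            + (q - 1) * powerWeight δ (q - 1 - 1) x y)))) := by
    have hnear : (fun y' => pdy (fun x y => C * powerWeight δ q x y) x y') =ᶠ[𝓝 y]
        fun y' => C * (2 * y' * (δ * powerWeight (δ - 1) q x y'
          + q * powerWeight δ (q - 1) x y')) :=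
      mem_of_superset (isOpen_ne.mem_nhds hy) fun _ h => hpdy _ h
    rw [pdy, hnear.deriv_eq]
    refine ((((hasDerivAt_id y).const_mul 2).mul
      (((hasDerivAt_powerWeight_y (δ - 1) q hy).const_mul δ).add
        ((hasDerivAt_powerWeight_y δ (q - 1) hy).const_mul q))).const_mul C).deriv.trans ?_
    simp only [id, Pi.add_apply]; ring
  rw [Mop, hpdx, hpdy y hy, hpdxx, hpdyy]
  simp only [powerWeight_sub_one_left (hs x), powerWeight_sub_one_right hy, lyapunovRatio, hq]
  field_simp
  ring

section lyapunovRatio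

variable {δ a₁ a₂ κ₁ κ₂ x y : ℝ}

lemma lyapunovRatio_sub_le (hδ₀ : 0 ≤ δ) (hδ₁ : δ ≤ 2 / 3) (hκ₁ : 0 ≤ κ₁) (hκ₂ : 0 ≤ κ₂)
    (hy : 1 ≤ |y|) :
    lyapunovRatio δ a₁ a₂ κ₁ κ₂ x y - x ≤ (|a₁| + 7 / 2 * |a₂| + 2 * κ₁ + 5 * κ₂) / |y| := by
  set s := x ^ 2 + y ^ 2
  have hy₀ : 0 < |y| := by linarith
  have hy_sq : |y| ≤ y ^ 2 := by nlinarith [sq_abs y]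
  have hy_s : y ^ 2 ≤ s := le_add_of_nonneg_left (sq_nonneg x)
  have hs : 0 < s := by linarith
  have hxy : 2 * |x| * |y| ≤ s := by nlinarith [sq_abs x, sq_abs y, sq_nonneg (|x| - |y|)]
  have ha₁ : 2 * a₁ * x / s ≤ |a₁| / |y| := by
    rw [div_le_div_iff₀ hs hy₀]
    nlinarith [abs_nonneg a₁, le_abs_self (a₁ * x), abs_mul a₁ x,
      mul_le_mul_of_nonneg_left hxy (abs_nonneg a₁), abs_mul_abs_self y]
  have ha₂ : 2 * a₂ * y / s ≤ 2 * |a₂| / |y| := by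
    rw [div_le_div_iff₀ hs hy₀]
    nlinarith [abs_nonneg a₂, le_abs_self (a₂ * y), abs_mul a₂ y, abs_mul_abs_self y,
      mul_le_mul_of_nonneg_left hy_s (abs_nonneg a₂)]
  have ha₂' : -(3 * a₂ / (2 * y)) ≤ 3 * |a₂| / (2 * |y|) := by
    simpa [abs_div, abs_mul] using neg_le_abs (3 * a₂ / (2 * y))
  have hinv_s : 1 / s ≤ 1 / |y| := one_div_le_one_div_of_le hy₀ (hy_sq.trans hy_s)
  have hinv_y : 1 / y ^ 2 ≤ 1 / |y| := one_div_le_one_div_of_le hy₀ hy_sq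
  have hx_neg : (4 * δ - 4) * x ^ 2 / s ^ 2 ≤ 0 :=
    div_nonpos_of_nonpos_of_nonneg (by nlinarith [sq_nonneg x]) (sq_nonneg s)
  have hy_neg : (4 * δ - 4) * y ^ 2 / s ^ 2 ≤ 0 :=
    div_nonpos_of_nonpos_of_nonneg (by nlinarith [sq_nonneg y]) (sq_nonneg s)
  have hκ₁_term : (4 * δ - 4) * x ^ 2 / s ^ 2 + 2 / s ≤ 2 * (1 / |y|) := by
    rw [div_eq_mul_one_div 2 s]; linarith
  have hκ₂_term : (4 * δ - 4) * y ^ 2 / s ^ 2 + (2 - 6 * δ) / s + (9 * δ / 4 + 3 / 2) / y ^ 2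
      ≤ 5 * (1 / |y|) := by
    rw [div_eq_mul_one_div (2 - 6 * δ) s, div_eq_mul_one_div (9 * δ / 4 + 3 / 2) (y ^ 2)]
    nlinarith [one_div_pos.2 hs, one_div_pos.2 (hy₀.trans_le hy_sq)]
  have hsplit : (|a₁| + 7 / 2 * |a₂| + 2 * κ₁ + 5 * κ₂) / |y| = |a₁| / |y| + 2 * |a₂| / |y|
      + 3 * |a₂| / (2 * |y|) + κ₁ * (2 * (1 / |y|)) + κ₂ * (5 * (1 / |y|)) := by
    field_simp; ring
  rw [hsplit, lyapunovRatio]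
  linarith [mul_le_mul_of_nonneg_left hκ₁_term hκ₁, mul_le_mul_of_nonneg_left hκ₂_term hκ₂]

lemma lyapunovRatio_le_half (hδ₀ : 0 ≤ δ) (hδ₁ : δ ≤ 2 / 3) (hκ₁ : 0 ≤ κ₁) (hκ₂ : 0 ≤ κ₂)
    (hx : x ≤ 0) (hy : 1 ≤ |y|) (hxy : 2 * |a₁| + 7 * |a₂| + 4 * κ₁ + 10 * κ₂ ≤ |x| * |y|) :
    lyapunovRatio δ a₁ a₂ κ₁ κ₂ x y ≤ x / 2 := by
  have hrem : (|a₁| + 7 / 2 * |a₂| + 2 * κ₁ + 5 * κ₂) / |y| ≤ -x / 2 := by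
    rw [div_le_iff₀ (by linarith), ← abs_of_nonpos hx]
    linarith
  linarith [lyapunovRatio_sub_le (a₁ := a₁) (a₂ := a₂) (x := x) hδ₀ hδ₁ hκ₁ hκ₂ hy]

end lyapunovRatio

lemma le_two_mul_abs_mul_abs {R x y : ℝ} (hx : 1 ≤ |x|) (hy : 1 ≤ |y|)
    (hR : R ^ 2 ≤ x ^ 2 + y ^ 2) : R ≤ 2 * |x| * |y| := by
  refine (le_abs_self R).trans (abs_le_of_sq_le_sq (hR.trans ?_) (by positivity))
  have hx2 : 1 ≤ |x| ^ 2 := one_le_pow₀ hx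
  have hy2 : 1 ≤ |y| ^ 2 := one_le_pow₀ hy
  rw [← sq_abs x, ← sq_abs y]
  nlinarith [mul_nonneg (sub_nonneg.2 hx2) (sub_nonneg.2 hy2)]

lemma rpow_quarter_le_div_abs_rpow {x y : ℝ} (hy : y ≠ 0) :
    (x ^ 2 + y ^ 2) ^ (1 / 4 : ℝ) ≤ (x ^ 2 + y ^ 2) / |y| ^ (3 / 2 : ℝ) := by
  have hs : 0 < x ^ 2 + y ^ 2 := by positivity
  have hy_le : |y| ^ (3 / 2 : ℝ) ≤ (x ^ 2 + y ^ 2) ^ (3 / 4 : ℝ) := by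
    rw [abs_rpow_three_halves]
    exact Real.rpow_le_rpow (sq_nonneg y) (by nlinarith [sq_nonneg x]) (by norm_num)
  calc (x ^ 2 + y ^ 2) ^ (1 / 4 : ℝ) = (x ^ 2 + y ^ 2) / (x ^ 2 + y ^ 2) ^ (3 / 4 : ℝ) := by
        rw [eq_div_iff (by positivity), ← Real.rpow_add hs]; norm_num
    _ ≤ (x ^ 2 + y ^ 2) / |y| ^ (3 / 2 : ℝ) := by gcongr

lemma exists_forall_le_div_abs_rpow_rpow {δ : ℝ} (hδ : 0 < δ) (K : ℝ) :
    ∃ R, ∀ x y : ℝ, y ≠ 0 → R ≤ x ^ 2 + y ^ 2 →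
      K ≤ ((x ^ 2 + y ^ 2) / |y| ^ (3 / 2 : ℝ)) ^ δ := by
  obtain ⟨R, hR⟩ := eventually_atTop.1
    ((tendsto_rpow_atTop (by positivity : 0 < 1 / 4 * δ)).eventually_ge_atTop K)
  refine ⟨R, fun x y hy hs => (hR _ hs).trans ?_⟩
  rw [Real.rpow_mul (by positivity)]
  exact Real.rpow_le_rpow (by positivity) (rpow_quarter_le_div_abs_rpow hy) hδ.le

lemma exists_mul_Mop_le_of_sq_le {τ δ C a₁ a₂ κ₁ κ₂ : ℝ} (hτ : τ ≠ 0) (hδ₀ : 0 ≤ δ)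
    (hδ₁ : δ ≤ 2 / 3) (hC : 0 ≤ C) (hκ₁ : 0 ≤ κ₁) (hκ₂ : 0 ≤ κ₂) {φ : ℝ → ℝ → ℝ}
    (hφ : ∀ x y, φ x y = C * ((x ^ 2 + y ^ 2) / |y| ^ (3 / 2 : ℝ)) ^ δ) :
    ∃ R : ℝ, 0 < R ∧ ∀ x y : ℝ, x ≤ -1 → 1 ≤ |y| → R ^ 2 ≤ x ^ 2 + y ^ 2 →
      τ * Mop τ a₁ a₂ κ₁ κ₂ φ x y ≤ δ / 2 * x * φ x y := by
  refine ⟨2 * (2 * |a₁| + 7 * |a₂| + 4 * κ₁ + 10 * κ₂) + 1, by positivity,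
    fun x y hx hy hR => ?_⟩
  have hy₀ : y ≠ 0 := abs_pos.1 (zero_lt_one.trans_le hy)
  have hφ_eq : ∀ x y, y ≠ 0 → φ x y = C * powerWeight δ (-(3 * δ / 4)) x y := fun x y hy => by
    rw [hφ, div_abs_rpow_rpow_eq_powerWeight δ hy]
  have hxy := le_two_mul_abs_mul_abs (le_abs.2 (Or.inr (by linarith))) hy hR
  have hratio := lyapunovRatio_le_half (a₁ := a₁) (a₂ := a₂) hδ₀ hδ₁ hκ₁ hκ₂
    (hx.trans (by norm_num)) hy (by linarith)
  have hφ_nonneg : 0 ≤ φ x y := by rw [hφ]; positivity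
  rw [Mop_congr_of_eqOn_ne_zero hφ_eq _ _ _ _ _ hy₀,
    mul_Mop_const_mul_powerWeight hτ _ _ _ _ _ _ hy₀, ← hφ_eq x y hy₀]
  calc δ * φ x y * lyapunovRatio δ a₁ a₂ κ₁ κ₂ x y ≤ δ * φ x y * (x / 2) := by gcongr
    _ = δ / 2 * x * φ x y := by ring

/-- the Lyapunov function `φ₃(x,y) = C₃ ((x²+y²)/|y|^{3/2})^δ` on
`X₃ = {x ≤ −1, |y| ≥ 1}`: nonnegative, tends to `∞` as `x²+y² → ∞` in `X₃`,
and for `x²+y²` large in `X₃`, `τ Mφ₃ ≤ (δ/2) x φ₃ ≤ −c |x| ((x²+y²)/|y|^{3/2})^δ`;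
in particular `Mφ₃ → −∞` as `x²+y² → ∞` in `X₃`. -/
theorem LF3 (τ δ C₃ a₁ a₂ κ₁ κ₂ : ℝ) (hτ : 0 < τ)
    (hδ : δ ∈ Set.Ioo (0 : ℝ) (1 / 2)) (hC : 0 < C₃)
    (hκ₁ : 0 ≤ κ₁) (hκ₂ : 0 < κ₂)
    (φ₃ : ℝ → ℝ → ℝ)
    (hφ : ∀ x y, φ₃ x y = C₃ * ((x ^ 2 + y ^ 2) / |y| ^ (3 / 2 : ℝ)) ^ (δ : ℝ)) :
    (∀ x y : ℝ, x ≤ -1 → 1 ≤ |y| → 0 ≤ φ₃ x y) ∧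
    (∀ K : ℝ, ∃ R : ℝ, ∀ x y : ℝ, x ≤ -1 → 1 ≤ |y| → R ≤ x ^ 2 + y ^ 2 →
      K ≤ φ₃ x y) ∧
    (∃ R : ℝ, 0 < R ∧ ∃ c : ℝ, 0 < c ∧ ∀ x y : ℝ, x ≤ -1 → 1 ≤ |y| →
      R ^ 2 ≤ x ^ 2 + y ^ 2 →
        τ * Mop τ a₁ a₂ κ₁ κ₂ φ₃ x y ≤ δ / 2 * x * φ₃ x y ∧
        δ / 2 * x * φ₃ x y ≤
          -c * |x| * ((x ^ 2 + y ^ 2) / |y| ^ (3 / 2 : ℝ)) ^ (δ : ℝ)) ∧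
    (∀ K : ℝ, ∃ R : ℝ, ∀ x y : ℝ, x ≤ -1 → 1 ≤ |y| → R ≤ x ^ 2 + y ^ 2 →
      Mop τ a₁ a₂ κ₁ κ₂ φ₃ x y ≤ K) := by
  obtain ⟨hδ₀, hδ₁⟩ := hδ
  have hφ_nonneg : ∀ x y, 0 ≤ φ₃ x y := fun x y => by rw [hφ]; positivity
  have hφ_large : ∀ K : ℝ, ∃ R : ℝ, ∀ x y : ℝ, x ≤ -1 → 1 ≤ |y| → R ≤ x ^ 2 + y ^ 2 →
      K ≤ φ₃ x y := fun K => by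
    obtain ⟨R, hR⟩ := exists_forall_le_div_abs_rpow_rpow hδ₀ (K / C₃)
    refine ⟨R, fun x y _ hy hs => ?_⟩
    rw [hφ, ← div_le_iff₀' hC]
    exact hR x y (abs_pos.1 (zero_lt_one.trans_le hy)) hs
  obtain ⟨R, hR₀, hdrift⟩ := exists_mul_Mop_le_of_sq_le (a₁ := a₁) (a₂ := a₂) hτ.ne' hδ₀.le
    (by linarith) hC.le hκ₁ hκ₂.le hφ
  refine ⟨fun x y _ _ => hφ_nonneg x y, hφ_large,
    ⟨R, hR₀, δ * C₃ / 2, by positivity, fun x y hx hy hs => ⟨hdrift x y hx hy hs, ?_⟩⟩,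
    fun K => ?_⟩
  · rw [hφ, abs_of_nonpos (hx.trans (by norm_num) : x ≤ 0)]
    linarith
  obtain ⟨R', hR'⟩ := hφ_large (-(2 * τ * K / δ))
  refine ⟨max (R ^ 2) R', fun x y hx hy hs => ?_⟩
  have hM := hdrift x y hx hy (le_of_max_le_left hs)
  have hφ_ge := hR' x y hx hy (le_of_max_le_right hs)
  rw [neg_le, le_div_iff₀ hδ₀] at hφ_ge
  have hτM : τ * Mop τ a₁ a₂ κ₁ κ₂ φ₃ x y ≤ τ * K := by
    nlinarith [mul_nonneg (by linarith : 0 ≤ -1 - x) (mul_nonneg hδ₀.le (hφ_nonneg x y))]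
  exact le_of_mul_le_mul_left hτM hτ
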